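/- The self-adjoint operators A := Y₊ − Y₋ and B := id − Y₊ − Y₋ satisfy A² + B² = id, AB + BA = 0, and A² and B² commute with both Y₊ and Y₋. -/

import Mathlib

/-!
The matrix `R⁻¹L` has order 6 in `SL(2,ℤ)`, with `(R⁻¹L)³ = -1` and `(R⁻¹L)⁵ = L⁻¹R`, so `Y₊` is a
polynomial in the unitary `u = 𝐑⁻¹𝐋` which is idempotent modulo `u⁶ = 1` and invariant under
`u ↦ u⁻¹ = u*`. Hence `Y₊` is an orthogonal projection, and so is its conjugate `Y₋` by the unitary
`𝐉`; the rest holds for any two orthogonal projections `P, Q`, with `A = P - Q` and `B = 1 - P - Q`.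
-/

noncomputable section

abbrev SL2Z := Matrix.SpecialLinearGroup (Fin 2) ℤ

def Lmat : SL2Z := ⟨!![1, 1; 0, 1], by decide⟩
def Rmat : SL2Z := ⟨!![1, 0; 1, 1], by decide⟩
def Jmat : SL2Z := ⟨!![0, 1; -1, 0], by decide⟩
def Imat : SL2Z := ⟨!![-1, 0; 0, -1], by decide⟩

variable {H : Type*} [NormedAddCommGroup H] [InnerProductSpace ℂ H] [CompleteSpace H]

/-- The bounded operator associated to a group element by the unitary representation. -/
def rop (ρ : SL2Z →* unitary (H →L[ℂ] H)) (g : SL2Z) : H →L[ℂ] H := (ρ g : H →L[ℂ] H)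

/-- The Markov operator T = (𝐋 + 𝐑)/2. -/
def opT (ρ : SL2Z →* unitary (H →L[ℂ] H)) : H →L[ℂ] H := (2 : ℂ)⁻¹ • (rop ρ Lmat + rop ρ Rmat)

/-- Y₊ = (1/3)((3/2)·id − (1/2)𝐈 + 𝐑⁻¹𝐋 + 𝐋⁻¹𝐑). -/
def opYp (ρ : SL2Z →* unitary (H →L[ℂ] H)) : H →L[ℂ] H :=
  (3 : ℂ)⁻¹ • ((3 / 2 : ℂ) • (1 : H →L[ℂ] H) - (2 : ℂ)⁻¹ • rop ρ Imat
    + rop ρ Rmat⁻¹ * rop ρ Lmat + rop ρ Lmat⁻¹ * rop ρ Rmat)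

/-- Y₋ = 𝐉* Y₊ 𝐉. -/
def opYm (ρ : SL2Z →* unitary (H →L[ℂ] H)) : H →L[ℂ] H :=
  ContinuousLinearMap.adjoint (rop ρ Jmat) * opYp ρ * rop ρ Jmat

/-- A = Y₊ − Y₋. -/
def opA (ρ : SL2Z →* unitary (H →L[ℂ] H)) : H →L[ℂ] H := opYp ρ - opYm ρ

/-- B = id − Y₊ − Y₋. -/
def opB (ρ : SL2Z →* unitary (H →L[ℂ] H)) : H →L[ℂ] H := 1 - opYp ρ - opYm ρ

section OrderSixProj

variable {𝕜 A : Type*} [Field 𝕜] [Ring A] [Algebra 𝕜 A]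

variable (𝕜) in
/-- For `u ^ 6 = 1` this is the spectral projection of `u` onto its eigenvalues `1, e^{± iπ/3}`:
`(18 + 12 x - 6 x³ + 12 x⁵) / 36` is `1` at these sixth roots of unity and `0` at the others. -/
def orderSixProj (u : A) : A := (36 : 𝕜)⁻¹ • (18 • (1 : A) + 12 • u - 6 • u ^ 3 + 12 • u ^ 5)

theorem isIdempotentElem_orderSixProj [CharZero 𝕜] {u : A} (hu : u ^ 6 = 1) :
    IsIdempotentElem (orderSixProj 𝕜 u) := by
  rw [IsIdempotentElem, orderSixProj]
  set w : A := 18 • (1 : A) + 12 • u - 6 • u ^ 3 + 12 • u ^ 5 with hw_def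
  have hw : w * w = 36 • w := by
    have h : w * w = 36 • w + (u ^ 6 - 1) * (324 • (1 : A) - 144 • u ^ 2 + 144 • u ^ 4) := by
      rw [hw_def]
      noncomm_ring
    rw [h, hu, sub_self, zero_mul, add_zero]
  rw [smul_mul_smul_comm, hw, ← Nat.cast_smul_eq_nsmul 𝕜, smul_smul]
  norm_num

theorem isSelfAdjoint_orderSixProj [StarRing 𝕜] [StarRing A] [StarModule 𝕜 A] {u : A}
    (hu : u ∈ unitary A) (h6 : u ^ 6 = 1) : IsSelfAdjoint (orderSixProj 𝕜 u) := by
  have hstar : star u = u ^ 5 := by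
    rw [← mul_one (star u), ← h6, pow_succ', ← mul_assoc, Unitary.star_mul_self_of_mem hu, one_mul]
  have h15 : (u ^ 5) ^ 3 = u ^ 3 := by rw [← pow_mul, pow_eq_pow_mod _ h6]
  have h25 : (u ^ 5) ^ 5 = u := by rw [← pow_mul, pow_eq_pow_mod _ h6, pow_one]
  rw [IsSelfAdjoint, orderSixProj, star_smul]
  simp only [star_inv₀, star_ofNat, star_add, star_sub, star_nsmul, star_one, star_pow, hstar,
    h15, h25]
  congr 1
  abel

end OrderSixProj

namespace IsIdempotentElem

variable {R : Type*} [Ring R] {p q : R}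

theorem sub_sq_add_one_sub_sub_sq (hp : IsIdempotentElem p) (hq : IsIdempotentElem q) :
    (p - q) ^ 2 + (1 - p - q) ^ 2 = 1 := by
  simp only [sq, mul_sub, sub_mul, one_mul, mul_one, hp.eq, hq.eq]
  abel

theorem sub_mul_one_sub_sub_add_one_sub_sub_mul_sub (hp : IsIdempotentElem p)
    (hq : IsIdempotentElem q) :
    (p - q) * (1 - p - q) + (1 - p - q) * (p - q) = 0 := by
  simp only [mul_sub, sub_mul, one_mul, mul_one, hp.eq, hq.eq]
  abel

theorem commute_sub_sq_left (hp : IsIdempotentElem p) (hq : IsIdempotentElem q) :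
    Commute ((p - q) ^ 2) p := by
  simp only [Commute, SemiconjBy, sq, mul_sub, sub_mul, mul_assoc, hp.eq]
  simp only [← mul_assoc, hp.eq, hq.eq]
  abel

theorem commute_sub_sq_right (hp : IsIdempotentElem p) (hq : IsIdempotentElem q) :
    Commute ((p - q) ^ 2) q := by
  rw [← neg_sub, neg_sq]
  exact hq.commute_sub_sq_left hp

end IsIdempotentElem

theorem Rmat_inv_mul_Lmat_pow_six : (Rmat⁻¹ * Lmat) ^ 6 = 1 := Subtype.ext (by decide)

theorem Imat_eq_pow : Imat = (Rmat⁻¹ * Lmat) ^ 3 := Subtype.ext (by decide)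

theorem Lmat_inv_mul_Rmat_eq_pow : Lmat⁻¹ * Rmat = (Rmat⁻¹ * Lmat) ^ 5 := Subtype.ext (by decide)

section Representation

variable (ρ : SL2Z →* unitary (H →L[ℂ] H))

theorem rop_mem_unitary (g : SL2Z) : rop ρ g ∈ unitary (H →L[ℂ] H) := (ρ g).2

theorem rop_mul (g h : SL2Z) : rop ρ (g * h) = rop ρ g * rop ρ h := by
  simp [rop]

theorem rop_pow (g : SL2Z) (n : ℕ) : rop ρ (g ^ n) = rop ρ g ^ n := by
  simp [rop]

theorem opYp_eq_orderSixProj : opYp ρ = orderSixProj ℂ (rop ρ (Rmat⁻¹ * Lmat)) := by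
  rw [opYp, orderSixProj, ← rop_mul, ← rop_mul, Imat_eq_pow, Lmat_inv_mul_Rmat_eq_pow, rop_pow,
    rop_pow]
  module

theorem isStarProjection_opYp : IsStarProjection (opYp ρ) := by
  have h6 : rop ρ (Rmat⁻¹ * Lmat) ^ 6 = 1 := by
    rw [← rop_pow, Rmat_inv_mul_Lmat_pow_six]
    simp [rop]
  rw [opYp_eq_orderSixProj]
  exact ⟨isIdempotentElem_orderSixProj h6, isSelfAdjoint_orderSixProj (rop_mem_unitary ρ _) h6⟩

theorem isStarProjection_opYm : IsStarProjection (opYm ρ) := by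
  have h := (isStarProjection_opYp ρ).map (Unitary.conjStarAlgAut ℂ _ (star (ρ Jmat)))
  rw [Unitary.conjStarAlgAut_star_apply] at h
  rwa [opYm, ← ContinuousLinearMap.star_eq_adjoint]

end Representation

/-- The self-adjoint operators A := Y₊ − Y₋ and B := id − Y₊ − Y₋ satisfy
A² + B² = id, AB + BA = 0, and A² and B² commute with both Y₊ and Y₋. -/
theorem A_B_supersymmetry (ρ : SL2Z →* unitary (H →L[ℂ] H)) :
    IsSelfAdjoint (opA ρ) ∧ IsSelfAdjoint (opB ρ) ∧
    opA ρ ^ 2 + opB ρ ^ 2 = 1 ∧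
    opA ρ * opB ρ + opB ρ * opA ρ = 0 ∧
    Commute (opA ρ ^ 2) (opYp ρ) ∧ Commute (opA ρ ^ 2) (opYm ρ) ∧
    Commute (opB ρ ^ 2) (opYp ρ) ∧ Commute (opB ρ ^ 2) (opYm ρ) := by
  obtain ⟨hP, hPsa⟩ := isStarProjection_opYp ρ
  obtain ⟨hQ, hQsa⟩ := isStarProjection_opYm ρ
  have hB : opB ρ ^ 2 = 1 - opA ρ ^ 2 := eq_sub_of_add_eq' (hP.sub_sq_add_one_sub_sub_sq hQ)
  refine ⟨hPsa.sub hQsa, (IsSelfAdjoint.one _ |>.sub hPsa).sub hQsa,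
    hP.sub_sq_add_one_sub_sub_sq hQ, hP.sub_mul_one_sub_sub_add_one_sub_sub_mul_sub hQ,
    hP.commute_sub_sq_left hQ, hP.commute_sub_sq_right hQ, ?_, ?_⟩
  · rw [hB]
    exact (Commute.one_left _).sub_left (hP.commute_sub_sq_left hQ)
  · rw [hB]
    exact (Commute.one_left _).sub_left (hP.commute_sub_sq_right hQ)
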